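/- arXiv:2505.07739 — 9 statements merged into one kernel-verified Lean document; each statement's English description precedes it below -/
import Mathlib

section
/- Let T = k[x_1, x_2, x_3, …]/J where k is a field and J is the ideal generated by x_i^(i+1) for all i ≥ 1 and x_i x_j for all i ≠ j, and let I be the ideal of T generated by the images of all x_i. Then I and T/I are strongly I-torsion T-modules, but T is not a strongly I-torsion T-module; hence the class of strongly I-torsion modules is not closed under extensions. -/
open MvPolynomial

set_option synthInstance.maxHeartbeats 1000000
set_option maxHeartbeats 1000000

/-- The ideal of relations `J`, generated by `x_i^(i+1)` for all `i ≥ 1` and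
`x_i x_j` for all `i ≠ j`, in the polynomial ring `k[x_1, x_2, x_3, …]`. -/
noncomputable def hrbekJ (k : Type) [Field k] : Ideal (MvPolynomial ℕ+ k) :=
  Ideal.span ({p | ∃ i : ℕ+, p = X i ^ ((i : ℕ) + 1)} ∪
    {p | ∃ i j : ℕ+, i ≠ j ∧ p = X i * X j})

/-- The quotient ring `T = k[x_1, x_2, x_3, …]/J`. -/
noncomputable abbrev hrbekT (k : Type) [Field k] : Type :=
  MvPolynomial ℕ+ k ⧸ hrbekJ k

/-- The ideal `I ⊆ T` generated by the images of all the variables `x_i`. -/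
noncomputable def hrbekI (k : Type) [Field k] : Ideal (hrbekT k) :=
  Ideal.span (Set.range fun i : ℕ+ => Ideal.Quotient.mk (hrbekJ k) (X i))

/-! Every generator `x_i` of `I` satisfies `I x_i ⊆ (x_i)²`, hence `I^i x_i ⊆ (x_i^(i+1)) = 0`;
since the elements killed by some power of `I` form a submodule, `I` is strongly `I`-torsion,
while `T/I` is killed by `I` itself. On the other hand `x_{n+1}^{n+1} ∈ I^(n+1)` is nonzero for
every `n`, as its image in `k[X]/(X^(n+2))` shows, so no power of `I` kills `1 ∈ T`. -/

namespace Submodule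

variable {R M : Type*} [CommSemiring R] [AddCommMonoid M] [Module R M]

/-- The elements killed by some power of `I` form the directed union
`⨆ n, torsionBySet R M (I ^ n)`, which is a submodule. -/
theorem exists_pow_smul_eq_zero_of_mem_span (I : Ideal R) {s : Set M}
    (hs : ∀ m ∈ s, ∃ n : ℕ, ∀ x ∈ I ^ n, x • m = 0) {m : M} (hm : m ∈ span R s) :
    ∃ n : ℕ, ∀ x ∈ I ^ n, x • m = 0 := by
  have hdir : Directed (· ≤ ·) fun n : ℕ => torsionBySet R M ↑(I ^ n) :=
    Monotone.directed_le fun i j hij => torsionBySet_le_torsionBySet_pow i j hij I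
  have hspan : span R s ≤ ⨆ n : ℕ, torsionBySet R M ↑(I ^ n) := span_le.mpr fun m hm => by
    obtain ⟨n, hn⟩ := hs m hm
    exact mem_iSup_of_mem n ((mem_torsionBySet_iff _ _).mpr fun x => hn x x.2)
  obtain ⟨n, hn⟩ := (mem_iSup_of_directed _ hdir).mp (hspan hm)
  exact ⟨n, fun x hx => (mem_torsionBySet_iff _ _).mp hn ⟨x, hx⟩⟩

end Submodule

theorem Ideal.pow_mul_le_pow_succ_of_mul_le {R : Type*} [CommSemiring R] {I J : Ideal R}
    (h : I * J ≤ J ^ 2) (n : ℕ) : I ^ n * J ≤ J ^ (n + 1) := by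
  induction n with
  | zero => simp
  | succ n ih =>
    calc I ^ (n + 1) * J = I ^ n * (I * J) := by ring
      _ ≤ I ^ n * J ^ 2 := Ideal.mul_mono_right h
      _ = I ^ n * J * J := by ring
      _ ≤ J ^ (n + 1) * J := Ideal.mul_mono_left ih
      _ = J ^ (n + 1 + 1) := by ring

section Hrbek

variable (k : Type) [Field k]

noncomputable def hrbekX (i : ℕ+) : hrbekT k :=
  Ideal.Quotient.mk (hrbekJ k) (X i)

theorem hrbekI_eq_span : hrbekI k = Ideal.span (Set.range (hrbekX k)) := rfl

theorem hrbekX_mem_hrbekI (i : ℕ+) : hrbekX k i ∈ hrbekI k :=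
  Ideal.subset_span ⟨i, rfl⟩

theorem hrbekX_pow_succ_self (i : ℕ+) : hrbekX k i ^ ((i : ℕ) + 1) = 0 := by
  rw [hrbekX, ← map_pow, Ideal.Quotient.eq_zero_iff_mem]
  exact Ideal.subset_span (Or.inl ⟨i, rfl⟩)

theorem hrbekX_mul_hrbekX_of_ne {i j : ℕ+} (hij : i ≠ j) : hrbekX k i * hrbekX k j = 0 := by
  rw [hrbekX, hrbekX, ← map_mul, Ideal.Quotient.eq_zero_iff_mem]
  exact Ideal.subset_span (Or.inr ⟨i, j, hij, rfl⟩)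

theorem hrbekI_mul_span_hrbekX_le (i : ℕ+) :
    hrbekI k * Ideal.span {hrbekX k i} ≤ Ideal.span {hrbekX k i} ^ 2 := by
  rw [hrbekI_eq_span, Ideal.span_mul_span', Ideal.span_le]
  rintro _ ⟨_, ⟨j, rfl⟩, _, rfl, rfl⟩
  dsimp only
  rcases eq_or_ne j i with rfl | hji
  · rw [pow_two]
    exact Ideal.mul_mem_mul (Ideal.mem_span_singleton_self _) (Ideal.mem_span_singleton_self _)
  · rw [hrbekX_mul_hrbekX_of_ne k hji]
    exact zero_mem _

theorem mul_hrbekX_eq_zero_of_mem_pow (i : ℕ+) {x : hrbekT k} (hx : x ∈ hrbekI k ^ (i : ℕ)) :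
    x * hrbekX k i = 0 := by
  have hmem := Ideal.pow_mul_le_pow_succ_of_mul_le (hrbekI_mul_span_hrbekX_le k i) i
    (Ideal.mul_mem_mul hx (Ideal.mem_span_singleton_self _))
  rwa [Ideal.span_singleton_pow, hrbekX_pow_succ_self, Ideal.span_singleton_eq_bot.mpr rfl,
    Ideal.mem_bot] at hmem

/-- `x_i ↦ X`, `x_j ↦ 0` for `j ≠ i` defines a map `T → k[X]/(X^(i+1))` under which
`x_i ^ i` survives. -/
theorem X_pow_self_notMem_hrbekJ (i : ℕ+) : X i ^ (i : ℕ) ∉ hrbekJ k := by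
  let B := Polynomial k ⧸ Ideal.span {(Polynomial.X : Polynomial k) ^ ((i : ℕ) + 1)}
  let ψ : MvPolynomial ℕ+ k →ₐ[k] B :=
    aeval fun j => if j = i then Ideal.Quotient.mk _ Polynomial.X else 0
  have hψ : hrbekJ k ≤ RingHom.ker ψ := by
    rw [hrbekJ, Ideal.span_le]
    rintro p (⟨a, rfl⟩ | ⟨a, b, hab, rfl⟩) <;>
      simp only [SetLike.mem_coe, RingHom.mem_ker, map_pow, map_mul, ψ, aeval_X]
    · split_ifs with ha
      · rw [← map_pow, ha, Ideal.Quotient.eq_zero_iff_mem]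
        exact Ideal.mem_span_singleton_self _
      · exact zero_pow (Nat.succ_ne_zero _)
    · split_ifs with ha hb hb <;> simp_all
  intro hmem
  have h0 : ψ (X i ^ (i : ℕ)) = 0 := hψ hmem
  rw [map_pow, aeval_X, if_pos rfl, ← map_pow, Ideal.Quotient.eq_zero_iff_mem,
    Ideal.mem_span_singleton, pow_dvd_pow_iff Polynomial.X_ne_zero Polynomial.not_isUnit_X] at h0
  exact Nat.not_succ_le_self _ h0

theorem hrbekX_pow_self_ne_zero (i : ℕ+) : hrbekX k i ^ (i : ℕ) ≠ 0 := by
  rw [hrbekX, ← map_pow, Ne, Ideal.Quotient.eq_zero_iff_mem]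
  exact X_pow_self_notMem_hrbekJ k i

end Hrbek

/-- Hrbek's example: for `T = k[x_1, x_2, …]/(x_i^(i+1), x_i x_j (i ≠ j))` and `I` the
ideal generated by the images of the `x_i`, the `T`-modules `I` and `T/I` are strongly
`I`-torsion, but `T` itself is not strongly `I`-torsion; hence the class of strongly
`I`-torsion modules is not closed under extensions. -/
theorem stmt5 (k : Type) [Field k] :
    (∀ m ∈ hrbekI k, ∃ n : ℕ, ∀ x ∈ (hrbekI k) ^ (n + 1), x * m = 0) ∧
    (∀ m : hrbekT k, ∃ n : ℕ, ∀ x ∈ (hrbekI k) ^ (n + 1), x * m ∈ hrbekI k) ∧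
    ¬ (∀ m : hrbekT k, ∃ n : ℕ, ∀ x ∈ (hrbekI k) ^ (n + 1), x * m = 0) := by
  refine ⟨fun m hm => ?_, fun m => ⟨0, fun x hx => ?_⟩, fun h => ?_⟩
  · obtain ⟨n, hn⟩ := Submodule.exists_pow_smul_eq_zero_of_mem_span (hrbekI k)
      (by rintro _ ⟨i, rfl⟩; exact ⟨i, fun x hx => mul_hrbekX_eq_zero_of_mem_pow k i hx⟩)
      (hrbekI_eq_span k ▸ hm)
    exact ⟨n, fun x hx => hn x (Ideal.pow_le_pow_right n.le_succ hx)⟩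
  · rw [zero_add, Submodule.pow_one] at hx
    exact Ideal.mul_mem_right m _ hx
  · obtain ⟨n, hn⟩ := h 1
    have h0 := hn _ (Ideal.pow_mem_pow (hrbekX_mem_hrbekI k n.succPNat) (n + 1))
    rw [mul_one] at h0
    exact hrbekX_pow_self_ne_zero k n.succPNat h0
end

section
/- Let T be a commutative ring, I ⊂ T an ideal, and M a T-module with the ordinal-indexed filtration F^(I)_0 M = {m : Im = 0}, F^(I)_α M = {m : Im ⊆ ⋃_{β<α} F^(I)_β M}. Then M = ⋃_β F^(I)_β M (union over all ordinals) if and only if for every m ∈ M and every sequence s_0, s_1, s_2, … of elements of I there exists n ≥ 0 such that s_n s_{n-1} ⋯ s_1 s_0 m = 0. -/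
/-!
If `m` lies in `F^(I)_α`, then for any `s₀ ∈ I` either `s₀ m = 0` or `s₀ m` lies in a strictly
earlier stage, so well-foundedness of the ordinals stops every sequence `s₀ m, s₁ s₀ m, …` at `0`.
Conversely, an element lying in no stage has some `s ∈ I` with `s m` again in no stage (otherwise
`m` would lie in the stage after the supremum of the stages of all `s m`); iterating this choice
gives a sequence in `I` whose partial products never kill `m`.
-/

/-- The ordinal-indexed increasing filtration `F^(I)` on a `T`-module `M`:
`F^(I)_0 M = {m : I m = 0}` and `F^(I)_α M = {m : I m ⊆ ⋃_{β < α} F^(I)_β M}`. -/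
noncomputable def Ffilt (T : Type) [CommRing T] (I : Ideal T) (M : Type) [AddCommGroup M]
    [Module T M] : Ordinal.{0} → Set M :=
  WellFounded.fix Ordinal.lt_wf (C := fun _ => Set M) fun α F =>
    { m | ∀ s ∈ I, s • m = 0 ∨ ∃ β, ∃ h : β < α, s • m ∈ F β h }

theorem exists_seq_forall_prod_smul {T M : Type*} [CommMonoid T] [MulAction T M] (S : Set T)
    (P : M → Prop) (step : ∀ x, P x → ∃ s ∈ S, P (s • x)) {m : M} (hm : P m) :
    ∃ s : ℕ → T, (∀ n, s n ∈ S) ∧ ∀ n, P ((∏ i ∈ Finset.range n, s i) • m) := by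
  choose! F hFS hFP using step
  let x : ℕ → M := fun n => Nat.rec m (fun _ y => F y • y) n
  have hx : ∀ n, P (x n) := fun n => Nat.rec hm (fun _ ih => hFP _ ih) n
  refine ⟨fun n => F (x n), fun n => hFS _ (hx n), fun n => ?_⟩
  suffices (∏ i ∈ Finset.range n, F (x i)) • m = x n from this ▸ hx n
  induction n with
  | zero => simp [x]
  | succ n ih => rw [Finset.prod_range_succ, mul_comm, mul_smul, ih]

namespace Ffilt

variable {T : Type} [CommRing T] {I : Ideal T} {M : Type} [AddCommGroup M] [Module T M]

theorem mem_iff {α : Ordinal.{0}} {m : M} :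
    m ∈ Ffilt T I M α ↔ ∀ s ∈ I, s • m = 0 ∨ ∃ β < α, s • m ∈ Ffilt T I M β := by
  unfold Ffilt
  rw [WellFounded.fix_eq]
  simp only [Set.mem_ofPred_eq, exists_prop]

theorem zero_mem (α : Ordinal.{0}) : (0 : M) ∈ Ffilt T I M α :=
  mem_iff.mpr fun s _ => .inl (smul_zero s)

theorem exists_prod_smul_eq_zero {α : Ordinal.{0}} {m : M} (hm : m ∈ Ffilt T I M α)
    {s : ℕ → T} (hs : ∀ n, s n ∈ I) : ∃ n, (∏ i ∈ Finset.range (n + 1), s i) • m = 0 := by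
  induction α using WellFoundedLT.induction generalizing m s with
  | _ α ih =>
    rcases mem_iff.mp hm (s 0) (hs 0) with h0 | ⟨β, hβ, hmem⟩
    · exact ⟨0, by simpa using h0⟩
    · obtain ⟨n, hn⟩ := ih β hβ hmem (s := fun k => s (k + 1)) fun k => hs (k + 1)
      refine ⟨n + 1, ?_⟩
      rw [Finset.prod_range_succ', mul_smul]
      exact hn

theorem exists_mem_of_forall_smul {m : M} (h : ∀ s ∈ I, ∃ β, s • m ∈ Ffilt T I M β) :
    ∃ α, m ∈ Ffilt T I M α := by
  choose f hf using fun s : I => h s s.2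
  refine ⟨Order.succ (⨆ s, f s), mem_iff.mpr fun s hs => .inr ⟨f ⟨s, hs⟩, ?_, hf ⟨s, hs⟩⟩⟩
  exact (le_ciSup (Ordinal.bddAbove_of_small) _).trans_lt (Order.lt_succ _)

theorem exists_smul_forall_notMem {m : M} (hm : ∀ α, m ∉ Ffilt T I M α) :
    ∃ s ∈ I, ∀ α, s • m ∉ Ffilt T I M α := by
  by_contra! h
  obtain ⟨α, hα⟩ := exists_mem_of_forall_smul h
  exact hm α hα

end Ffilt

/-- A `T`-module `M` is quite `I`-torsion (i.e. `M = ⋃_β F^(I)_β M`, union over all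
ordinals) if and only if for every `m ∈ M` and every sequence `s_0, s_1, s_2, …` of
elements of `I` there exists `n ≥ 0` with `s_n ⋯ s_1 s_0 m = 0`. -/
theorem stmt6 (T : Type) [CommRing T] (I : Ideal T)
    (M : Type) [AddCommGroup M] [Module T M] :
    (∀ m : M, ∃ β : Ordinal.{0}, m ∈ Ffilt T I M β) ↔
      (∀ (m : M) (s : ℕ → T), (∀ n : ℕ, s n ∈ I) →
        ∃ n : ℕ, (∏ i ∈ Finset.range (n + 1), s i) • m = 0) := by
  refine ⟨fun h m s hs => ?_, fun h m => ?_⟩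
  · obtain ⟨β, hβ⟩ := h m
    exact Ffilt.exists_prod_smul_eq_zero hβ hs
  · by_contra! hm
    obtain ⟨s, hsI, hs⟩ := exists_seq_forall_prod_smul (I : Set T) (fun x => ∀ α, x ∉ Ffilt T I M α)
      (fun _ => Ffilt.exists_smul_forall_notMem) hm
    obtain ⟨n, hn⟩ := h m s hsI
    exact hs (n + 1) 0 (hn ▸ Ffilt.zero_mem 0)
end

section
/- Let T be a commutative ring, I ⊂ T an ideal, and G ⊆ I a generating set of I. If for every m ∈ M and every sequence s_0, s_1, s_2, … of elements of G there exists n ≥ 0 with s_n ⋯ s_1 s_0 m = 0, then M is quite I-torsion (the T-nilpotence condition may be checked on generators). -/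
theorem exists_seq_forall_prod_smul_notMem {T M : Type*} [CommMonoid T] [MulAction T M]
    {G : Set T} {S : Set M} (hS : ∀ x ∉ S, ∃ g ∈ G, g • x ∉ S) {m : M} (hm : m ∉ S) :
    ∃ s : ℕ → T, (∀ n, s n ∈ G) ∧ ∀ n, (∏ i ∈ Finset.range n, s i) • m ∉ S := by
  choose g hgG hgS using hS
  let x : ℕ → {y : M // y ∉ S} := fun n =>
    Nat.rec ⟨m, hm⟩ (fun _ y => ⟨g y.1 y.2 • y.1, hgS y.1 y.2⟩) n
  let s : ℕ → T := fun n => g (x n).1 (x n).2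
  have hx : ∀ n, (x n).1 = (∏ i ∈ Finset.range n, s i) • m := by
    intro n
    induction n with
    | zero => simp [x]
    | succ n ih =>
      change s n • (x n).1 = _
      rw [ih, smul_smul, Finset.prod_range_succ, mul_comm]
  exact ⟨s, fun n => hgG _ _, fun n => hx n ▸ (x n).2⟩

section Ffilt

variable {T : Type} [CommRing T] {I : Ideal T} {M : Type} [AddCommGroup M] [Module T M]

theorem mem_Ffilt {α : Ordinal.{0}} {m : M} :
    m ∈ Ffilt T I M α ↔ ∀ s ∈ I, s • m = 0 ∨ ∃ β < α, s • m ∈ Ffilt T I M β := by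
  rw [Ffilt, WellFounded.fix_eq]
  simp only [Set.mem_ofPred_eq, exists_prop]

theorem Ffilt_mono {α β : Ordinal.{0}} (h : α ≤ β) : Ffilt T I M α ⊆ Ffilt T I M β :=
  fun _ hm => mem_Ffilt.2 fun s hs =>
    (mem_Ffilt.1 hm s hs).imp_right fun ⟨γ, hγ, hx⟩ => ⟨γ, hγ.trans_le h, hx⟩

theorem zero_mem_Ffilt (α : Ordinal.{0}) : (0 : M) ∈ Ffilt T I M α :=
  mem_Ffilt.2 fun s _ => Or.inl (smul_zero s)

theorem smul_mem_Ffilt {α : Ordinal.{0}} (t : T) {m : M} (hm : m ∈ Ffilt T I M α) :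
    t • m ∈ Ffilt T I M α := by
  induction α using WellFoundedLT.induction generalizing m with
  | ind α ih =>
    rw [mem_Ffilt] at hm ⊢
    intro s hs
    rw [smul_comm]
    rcases hm s hs with h0 | ⟨γ, hγ, hx⟩
    · exact Or.inl (by rw [h0, smul_zero])
    · exact Or.inr ⟨γ, hγ, ih γ hγ hx⟩

theorem add_mem_Ffilt {α : Ordinal.{0}} {m m' : M} (hm : m ∈ Ffilt T I M α)
    (hm' : m' ∈ Ffilt T I M α) : m + m' ∈ Ffilt T I M α := by
  induction α using WellFoundedLT.induction generalizing m m' with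
  | ind α ih =>
    rw [mem_Ffilt] at hm hm' ⊢
    intro s hs
    rw [smul_add]
    rcases hm s hs with h0 | ⟨γ, hγ, hx⟩ <;> rcases hm' s hs with h0' | ⟨γ', hγ', hx'⟩
    · exact Or.inl (by rw [h0, h0', add_zero])
    · exact Or.inr ⟨γ', hγ', by rwa [h0, zero_add]⟩
    · exact Or.inr ⟨γ, hγ, by rwa [h0', add_zero]⟩
    · exact Or.inr ⟨max γ γ', max_lt hγ hγ', ih _ (max_lt hγ hγ')
        (Ffilt_mono (le_max_left _ _) hx) (Ffilt_mono (le_max_right _ _) hx')⟩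

variable (T I M) in
def quiteTorsion : Submodule T M where
  carrier := { m | ∃ β, m ∈ Ffilt T I M β }
  zero_mem' := ⟨0, zero_mem_Ffilt 0⟩
  add_mem' := fun ⟨α, ha⟩ ⟨β, hb⟩ =>
    ⟨max α β, add_mem_Ffilt (Ffilt_mono (le_max_left _ _) ha) (Ffilt_mono (le_max_right _ _) hb)⟩
  smul_mem' t _ := fun ⟨α, ha⟩ => ⟨α, smul_mem_Ffilt t ha⟩

theorem mem_quiteTorsion_of_forall_smul_mem {m : M}
    (hm : ∀ s ∈ I, s • m ∈ quiteTorsion T I M) : m ∈ quiteTorsion T I M := by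
  choose β hβ using hm
  refine ⟨Order.succ (⨆ s : I, β s s.2), mem_Ffilt.2 fun s hs => Or.inr ⟨β s hs, ?_, hβ s hs⟩⟩
  exact Order.lt_succ_of_le (le_ciSup Ordinal.bddAbove_of_small (⟨s, hs⟩ : I))

theorem mem_quiteTorsion_of_forall_generator_smul_mem {G : Set T} (hGI : I = Ideal.span G)
    {m : M} (hm : ∀ g ∈ G, g • m ∈ quiteTorsion T I M) : m ∈ quiteTorsion T I M := by
  have hI : Ideal.span G ≤ (quiteTorsion T I M).comap (LinearMap.toSpanSingleton T M m) :=
    Ideal.span_le.2 hm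
  exact mem_quiteTorsion_of_forall_smul_mem fun s hs => hI (hGI ▸ hs)

end Ffilt

/-- The T-nilpotence condition for quite torsion may be checked on any set of generators
`G` of the ideal `I`: if for every `m ∈ M` and every sequence `s_0, s_1, …` of elements
of `G` some product `s_n ⋯ s_1 s_0` annihilates `m`, then `M` is quite `I`-torsion. -/
theorem stmt7 (T : Type) [CommRing T] (G : Set T) (I : Ideal T) (hGI : I = Ideal.span G)
    (M : Type) [AddCommGroup M] [Module T M]
    (h : ∀ (m : M) (s : ℕ → T), (∀ n : ℕ, s n ∈ G) →
      ∃ n : ℕ, (∏ i ∈ Finset.range (n + 1), s i) • m = 0) :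
    ∀ m : M, ∃ β : Ordinal.{0}, m ∈ Ffilt T I M β := by
  intro m
  by_contra hm
  have hstep : ∀ x ∉ (quiteTorsion T I M : Set M), ∃ g ∈ G, g • x ∉ quiteTorsion T I M := by
    intro x hx
    by_contra! hG
    exact hx (mem_quiteTorsion_of_forall_generator_smul_mem hGI hG)
  obtain ⟨s, hsG, hs⟩ := exists_seq_forall_prod_smul_notMem hstep hm
  obtain ⟨n, hn⟩ := h m s hsG
  exact hs (n + 1) (hn ▸ (quiteTorsion T I M).zero_mem)
end

section
/- Let T = k[x_1, x_2, x_3, …] be a polynomial ring in countably many variables over a field k, I the ideal generated by all x_i, and J' the ideal generated by x_1^2, x_2^2, x_3^2, …. Then M = T/J' is an I-torsion T-module, but F^(I)_0 M = 0 (no nonzero element of M is annihilated by all of I), hence M is not quite I-torsion. -/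
open MvPolynomial

set_option synthInstance.maxHeartbeats 1000000
set_option maxHeartbeats 1000000

/-- The ideal `I ⊆ k[x_1, x_2, …]` generated by all the variables. -/
noncomputable def varIdeal (k : Type) [Field k] : Ideal (MvPolynomial ℕ+ k) :=
  Ideal.span (Set.range (X : ℕ+ → MvPolynomial ℕ+ k))

/-- The ideal `J' ⊆ k[x_1, x_2, …]` generated by `x_1², x_2², x_3², …`. -/
noncomputable def sqIdeal (k : Type) [Field k] : Ideal (MvPolynomial ℕ+ k) :=
  Ideal.span (Set.range fun i : ℕ+ => (X i : MvPolynomial ℕ+ k) ^ 2)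

/-! Modulo `J' = (x_i²)` a polynomial lies in `J'` iff each of its monomials is divisible by some
`x_i²`. Every variable is nilpotent mod `J'`, so `T/J'` is `I`-torsion. But a monomial outside
`J'` involves only finitely many variables, and multiplying it by a fresh variable `x_j` keeps it
outside `J'`; hence only `0` is killed by `I`. An induction on the ordinal then shows that every
stage of the filtration is `{0}`, while `T/J'` is nonzero. -/

section Filtration

variable {T : Type} [CommRing T] {I : Ideal T} {M : Type} [AddCommGroup M] [Module T M]

lemma Ffilt_eq (α : Ordinal.{0}) :
    Ffilt T I M α = {m | ∀ s ∈ I, s • m = 0 ∨ ∃ β < α, s • m ∈ Ffilt T I M β} := by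
  rw [Ffilt, WellFounded.fix_eq]
  simp only [exists_prop]

lemma Ffilt_eq_singleton_zero (h : ∀ m : M, (∀ s ∈ I, s • m = 0) → m = 0)
    (α : Ordinal.{0}) : Ffilt T I M α = {0} := by
  induction α using WellFoundedLT.induction with
  | _ α ih =>
    ext m
    rw [Ffilt_eq, Set.mem_singleton_iff]
    refine ⟨fun hm => h m fun s hs => ?_, fun hm s _ => .inl (by rw [hm, smul_zero])⟩
    rcases hm s hs with hzero | ⟨β, hβ, hmem⟩
    · exact hzero
    · rwa [ih β hβ, Set.mem_singleton_iff] at hmem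

end Filtration

lemma Ideal.Quotient.exists_pow_succ_smul_eq_zero {T : Type*} [CommRing T] {J : Ideal T} {s : T}
    (hs : s ∈ J.radical) (m : T ⧸ J) : ∃ n : ℕ, s ^ (n + 1) • m = 0 := by
  obtain ⟨n, hn⟩ := hs
  have hkill : ∀ x : T ⧸ J, s ^ n • x = 0 := fun x => by
    rw [Algebra.smul_def, Ideal.Quotient.algebraMap_eq, Ideal.Quotient.eq_zero_iff_mem.mpr hn,
      zero_mul]
  exact ⟨n, by rw [pow_succ, mul_smul, hkill]⟩

namespace MvPolynomial

variable {σ R : Type*} [CommSemiring R]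

lemma mem_span_X_sq_iff {p : MvPolynomial σ R} :
    p ∈ Ideal.span (Set.range fun i => (X i : MvPolynomial σ R) ^ 2) ↔
      ∀ d ∈ p.support, ∃ i, 2 ≤ d i := by
  have hspan : Set.range (fun i => (X i : MvPolynomial σ R) ^ 2) =
      (fun d => monomial d (1 : R)) '' Set.range fun i => Finsupp.single i 2 := by
    rw [← Set.range_comp]
    simp only [Function.comp_def, X_pow_eq_monomial]
  rw [hspan, mem_ideal_span_monomial_image]
  simp only [Set.exists_range_iff, Finsupp.single_le_iff]

lemma one_notMem_span_X_sq [Nontrivial R] :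
    (1 : MvPolynomial σ R) ∉ Ideal.span (Set.range fun i => (X i : MvPolynomial σ R) ^ 2) := by
  intro h
  obtain ⟨i, hi⟩ := mem_span_X_sq_iff.mp h 0 (by simp)
  simp at hi

lemma mem_span_X_sq_of_forall_X_mul_mem [Infinite σ] {p : MvPolynomial σ R}
    (h : ∀ i, X i * p ∈ Ideal.span (Set.range fun i => (X i : MvPolynomial σ R) ^ 2)) :
    p ∈ Ideal.span (Set.range fun i => (X i : MvPolynomial σ R) ^ 2) := by
  rw [mem_span_X_sq_iff]
  intro d hd
  obtain ⟨j, hj⟩ := Finset.exists_notMem d.support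
  have hjd : Finsupp.single j 1 + d ∈ (X j * p).support := by
    rwa [mem_support_iff, coeff_X_mul, ← mem_support_iff]
  obtain ⟨i, hi⟩ := mem_span_X_sq_iff.mp (h j) _ hjd
  rw [Finsupp.notMem_support_iff] at hj
  refine ⟨i, ?_⟩
  rcases eq_or_ne j i with rfl | hji
  · simp [hj] at hi
  · simpa [Finsupp.single_apply, hji] using hi

lemma span_X_le_radical_span_X_sq :
    Ideal.span (Set.range (X : σ → MvPolynomial σ R)) ≤
      (Ideal.span (Set.range fun i => (X i : MvPolynomial σ R) ^ 2)).radical :=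
  Ideal.span_le.mpr <| Set.range_subset_iff.mpr fun i => ⟨2, Ideal.subset_span ⟨i, rfl⟩⟩

lemma eq_zero_of_forall_span_X_smul_eq_zero {R : Type*} [CommRing R] [Infinite σ]
    (m : MvPolynomial σ R ⧸ Ideal.span (Set.range fun i => (X i : MvPolynomial σ R) ^ 2))
    (h : ∀ s ∈ Ideal.span (Set.range (X : σ → MvPolynomial σ R)), s • m = 0) : m = 0 := by
  obtain ⟨p, rfl⟩ := Ideal.Quotient.mk_surjective m
  refine Ideal.Quotient.eq_zero_iff_mem.mpr (mem_span_X_sq_of_forall_X_mul_mem fun i => ?_)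
  exact Ideal.Quotient.eq_zero_iff_mem.mp (h (X i) (Ideal.subset_span ⟨i, rfl⟩))

end MvPolynomial

/-- Let `T = k[x_1, x_2, x_3, …]`, `I` the ideal generated by all the variables, and
`J'` the ideal generated by `x_1², x_2², x_3², …`. Then the `T`-module `M = T/J'` is
`I`-torsion, but `F^(I)_0 M = 0` (no nonzero element of `M` is annihilated by all of
`I`), and hence `M` is not quite `I`-torsion. -/
theorem stmt8 (k : Type) [Field k] :
    (∀ s ∈ varIdeal k, ∀ m : MvPolynomial ℕ+ k ⧸ sqIdeal k,
      ∃ n : ℕ, s ^ (n + 1) • m = 0) ∧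
    Ffilt (MvPolynomial ℕ+ k) (varIdeal k) (MvPolynomial ℕ+ k ⧸ sqIdeal k) 0 = {0} ∧
    ¬ (∀ m : MvPolynomial ℕ+ k ⧸ sqIdeal k, ∃ β : Ordinal.{0},
        m ∈ Ffilt (MvPolynomial ℕ+ k) (varIdeal k) (MvPolynomial ℕ+ k ⧸ sqIdeal k) β) := by
  have hFfilt : ∀ β,
      Ffilt (MvPolynomial ℕ+ k) (varIdeal k) (MvPolynomial ℕ+ k ⧸ sqIdeal k) β = {0} :=
    Ffilt_eq_singleton_zero eq_zero_of_forall_span_X_smul_eq_zero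
  refine ⟨fun s hs => Ideal.Quotient.exists_pow_succ_smul_eq_zero
    (span_X_le_radical_span_X_sq hs), hFfilt 0, fun hquite => ?_⟩
  obtain ⟨β, hβ⟩ := hquite 1
  rw [hFfilt β, Set.mem_singleton_iff, ← map_one (Ideal.Quotient.mk _),
    Ideal.Quotient.eq_zero_iff_mem] at hβ
  exact one_notMem_span_X_sq hβ
end

section
/- Let R be a commutative ring and A, B be R-R-bimodules that are quasi-modules over R (meaning for every element b and every r ∈ R, some power of the commutator operator θ_r(b) = rb − br annihilates b). Then the R-R-bimodule A ⊗_R B (tensored over the right action on A and left action on B) is also a quasi-module over R. -/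
/-!
The commutator operator of `A ⊗_R B` is `θ ⊗ 1 + 1 ⊗ θ'`, where `θ` and `θ'` are the commutator
operators of `A` and `B`: the middle terms `r a ⊗ b` and `a ⊗ r b` cancel because the tensor product
is balanced. The two summands commute, so on a pure tensor `a ⊗ b` a power of their sum expands by
the binomial theorem, and every term is killed by a power of `θ` on `a` or of `θ'` on `b`. The vectors
killed by some power of an operator form a submodule, its maximal generalized `0`-eigenspace, so
the claim follows for all of `A ⊗_R B`.
-/

open TensorProduct

namespace Module.End

variable {R M N : Type*} [CommRing R] [AddCommGroup M] [AddCommGroup N] [Module R M] [Module R N]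

lemma maxGenEigenspace_zero_eq_top_iff (f : End R M) :
    f.maxGenEigenspace 0 = ⊤ ↔ ∀ m, ∃ n : ℕ, (⇑f)^[n + 1] m = 0 := by
  simp only [Submodule.eq_top_iff', mem_maxGenEigenspace, zero_smul, sub_zero, ← pow_apply]
  exact forall_congr' fun m =>
    ⟨fun ⟨k, hk⟩ => ⟨k, pow_map_zero_of_le k.le_succ hk⟩, fun ⟨n, hn⟩ => ⟨n + 1, hn⟩⟩

lemma tmul_mem_maxGenEigenspace_rTensor {f : End R M} {μ : R} {m : M}
    (hm : m ∈ f.maxGenEigenspace μ) (n : N) :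
    m ⊗ₜ n ∈ maxGenEigenspace (f.rTensor N) μ := by
  obtain ⟨k, hk⟩ := (mem_maxGenEigenspace f μ m).1 hm
  refine (mem_maxGenEigenspace _ μ _).2 ⟨k, ?_⟩
  rw [one_eq_id, ← LinearMap.rTensor_id, ← LinearMap.rTensor_smul, ← LinearMap.rTensor_sub,
    LinearMap.rTensor_pow, LinearMap.rTensor_tmul, ← one_eq_id, hk, zero_tmul]

lemma tmul_mem_maxGenEigenspace_lTensor {g : End R N} {ν : R} (m : M) {n : N}
    (hn : n ∈ g.maxGenEigenspace ν) :
    m ⊗ₜ n ∈ maxGenEigenspace (g.lTensor M) ν := by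
  obtain ⟨k, hk⟩ := (mem_maxGenEigenspace g ν n).1 hn
  refine (mem_maxGenEigenspace _ ν _).2 ⟨k, ?_⟩
  rw [one_eq_id, ← LinearMap.lTensor_id, ← LinearMap.lTensor_smul, ← LinearMap.lTensor_sub,
    LinearMap.lTensor_pow, LinearMap.lTensor_tmul, ← one_eq_id, hk, tmul_zero]

lemma commute_rTensor_lTensor (f : End R M) (g : End R N) :
    Commute (f.rTensor N) (g.lTensor M) :=
  (LinearMap.rTensor_comp_lTensor (f := f) (g := g)).trans
    (LinearMap.lTensor_comp_rTensor (f := f) (g := g)).symm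

lemma tmul_mem_maxGenEigenspace_rTensor_add_lTensor {f : End R M} {g : End R N} {μ ν : R}
    {m : M} {n : N} (hm : m ∈ f.maxGenEigenspace μ) (hn : n ∈ g.maxGenEigenspace ν) :
    m ⊗ₜ n ∈ maxGenEigenspace (f.rTensor N + g.lTensor M) (μ + ν) :=
  genEigenspace_inf_le_add _ _ μ ν ⊤ ⊤ (commute_rTensor_lTensor f g)
    ⟨tmul_mem_maxGenEigenspace_rTensor hm n, tmul_mem_maxGenEigenspace_lTensor m hn⟩

theorem maxGenEigenspace_rTensor_add_lTensor_eq_top {f : End R M} {g : End R N} {μ ν : R}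
    (hf : f.maxGenEigenspace μ = ⊤) (hg : g.maxGenEigenspace ν = ⊤) :
    maxGenEigenspace (f.rTensor N + g.lTensor M) (μ + ν) = ⊤ := by
  rw [eq_top_iff, ← span_tmul_eq_top, Submodule.span_le]
  rintro _ ⟨m, n, rfl⟩
  exact tmul_mem_maxGenEigenspace_rTensor_add_lTensor (hf ▸ Submodule.mem_top)
    (hg ▸ Submodule.mem_top)

end Module.End

open Module.End

/-- If `A` and `B` are quasi-modules over `R`, then so is `A ⊗_R B`. -/
theorem stmt10 (R : Type) [CommRing R]
    (A B : Type) [AddCommGroup A] [AddCommGroup B] [Module R A] [Module R B]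
    (ρA : R →+* Module.End R A) (ρB : R →+* Module.End R B)
    (hA : ∀ (r : R) (a : A), ∃ n : ℕ, (fun x => ρA r x - r • x)^[n + 1] a = 0)
    (hB : ∀ (r : R) (b : B), ∃ n : ℕ, (fun x => r • x - ρB r x)^[n + 1] b = 0) :
    ∀ (r : R) (x : TensorProduct R A B), ∃ n : ℕ,
      (fun y => LinearMap.rTensor B (ρA r) y - LinearMap.lTensor A (ρB r) y)^[n + 1] x
        = 0 := by
  intro r
  have hθ : LinearMap.rTensor B (ρA r) - LinearMap.lTensor A (ρB r) =
      (ρA r - r • 1).rTensor B + (r • 1 - ρB r).lTensor A := by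
    simp only [LinearMap.rTensor_sub, LinearMap.lTensor_sub, LinearMap.rTensor_smul,
      LinearMap.lTensor_smul, one_eq_id, LinearMap.rTensor_id, LinearMap.lTensor_id]
    abel
  have h := maxGenEigenspace_rTensor_add_lTensor_eq_top
    ((maxGenEigenspace_zero_eq_top_iff (ρA r - r • 1)).2 (hA r))
    ((maxGenEigenspace_zero_eq_top_iff (r • 1 - ρB r)).2 (hB r))
  rw [← hθ, add_zero] at h
  exact (maxGenEigenspace_zero_eq_top_iff _).1 h
end

section
/- Let R be a commutative ring and A, B be R-R-bimodules that are strong quasi-modules over R. Then A ⊗_R B is a strong quasi-module over R; moreover, with F_n the natural filtration (F_n C = {c : rc − cr ∈ F_{n-1}C for all r ∈ R}, F_{-1}C = 0), one has Σ_{i+j=n} im(F_i A ⊗_R F_j B) ⊆ F_n(A ⊗_R B). -/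
/-!
The commutator `θ_r` of `A ⊗_R B` satisfies the Leibniz rule
`θ_r (a ⊗ b) = θ_r a ⊗ b + a ⊗ θ_r b`, so by induction on `i + j` pure tensors of elements
of `F_i A` and `F_j B` lie in `F_{i+j}(A ⊗_R B)`. Each `F_n` is a submodule and the `F_n` form
an increasing chain, so their union is a submodule; it contains all pure tensors, which span
`A ⊗_R B`.
-/

def Ffin (R : Type) [CommRing R] {C : Type} [AddCommGroup C] (θ : R → C → C) :
    ℕ → Set C
  | 0 => { c | ∀ r : R, θ r c = 0 }
  | n + 1 => { c | ∀ r : R, θ r c ∈ Ffin R θ n }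

open TensorProduct

namespace Ffin

variable {R : Type} [CommRing R] {A B C : Type} [AddCommGroup A] [AddCommGroup B]
  [AddCommGroup C] [Module R A] [Module R B] [Module R C]

def submodule (θ : R → C →ₗ[R] C) : ℕ → Submodule R C
  | 0 => ⨅ r, LinearMap.ker (θ r)
  | n + 1 => ⨅ r, (submodule θ n).comap (θ r)

theorem coe_submodule (θ : R → C →ₗ[R] C) (n : ℕ) :
    (submodule θ n : Set C) = Ffin R (fun r => θ r) n := by
  induction n with
  | zero => ext x; simp [submodule, Ffin]
  | succ n ih => ext x; simp [submodule, Ffin, ← ih]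

theorem apply_mem_submodule_zero {θ : R → C →ₗ[R] C} {x : C} (hx : x ∈ submodule θ 0) (r : R) :
    θ r x = 0 := by
  simp only [submodule, Submodule.mem_iInf, LinearMap.mem_ker] at hx
  exact hx r

theorem apply_mem_submodule_succ {θ : R → C →ₗ[R] C} {n : ℕ} {x : C}
    (hx : x ∈ submodule θ (n + 1)) (r : R) : θ r x ∈ submodule θ n := by
  simp only [submodule, Submodule.mem_iInf, Submodule.mem_comap] at hx
  exact hx r

theorem mem_submodule_zero {θ : R → C →ₗ[R] C} {x : C} (hx : ∀ r, θ r x = 0) :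
    x ∈ submodule θ 0 := by
  simp only [submodule, Submodule.mem_iInf, LinearMap.mem_ker]
  exact hx

theorem mem_submodule_succ {θ : R → C →ₗ[R] C} {n : ℕ} {x : C}
    (hx : ∀ r, θ r x ∈ submodule θ n) : x ∈ submodule θ (n + 1) := by
  simp only [submodule, Submodule.mem_iInf, Submodule.mem_comap]
  exact hx

theorem submodule_mono (θ : R → C →ₗ[R] C) : Monotone (submodule θ) := by
  refine monotone_nat_of_le_succ fun n => ?_
  induction n with
  | zero =>
    refine fun x hx => mem_submodule_succ fun r => ?_
    rw [apply_mem_submodule_zero hx r]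
    exact zero_mem _
  | succ n ih => exact fun x hx => mem_submodule_succ fun r => ih (apply_mem_submodule_succ hx r)

theorem map_mem_submodule_add {θA : R → A →ₗ[R] A} {θB : R → B →ₗ[R] B}
    {θC : R → C →ₗ[R] C} (f : A →ₗ[R] B →ₗ[R] C)
    (hf : ∀ r a b, θC r (f a b) = f (θA r a) b + f a (θB r b)) {i j : ℕ} {a : A} {b : B}
    (ha : a ∈ submodule θA i) (hb : b ∈ submodule θB j) : f a b ∈ submodule θC (i + j) := by
  induction hn : i + j generalizing i j a b with
  | zero =>
    obtain ⟨rfl, rfl⟩ : i = 0 ∧ j = 0 := by omega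
    refine mem_submodule_zero fun r => ?_
    rw [hf, apply_mem_submodule_zero ha, apply_mem_submodule_zero hb, map_zero,
      LinearMap.zero_apply, map_zero, add_zero]
  | succ n ih =>
    refine mem_submodule_succ fun r => ?_
    rw [hf]
    refine add_mem ?_ ?_
    · cases i with
      | zero => rw [apply_mem_submodule_zero ha, map_zero, LinearMap.zero_apply]; exact zero_mem _
      | succ i => exact ih (apply_mem_submodule_succ ha r) hb (by omega)
    · cases j with
      | zero => rw [apply_mem_submodule_zero hb, map_zero]; exact zero_mem _
      | succ j => exact ih ha (apply_mem_submodule_succ hb r) (by omega)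

theorem exists_mem_submodule_of_span_eq_top {θ : R → C →ₗ[R] C} {s : Set C}
    (hs : Submodule.span R s = ⊤) (h : ∀ x ∈ s, ∃ n, x ∈ submodule θ n) (x : C) :
    ∃ n, x ∈ submodule θ n := by
  have hle : Submodule.span R s ≤ ⨆ n, submodule θ n := by
    refine Submodule.span_le.2 fun y hy => ?_
    obtain ⟨n, hn⟩ := h y hy
    exact Submodule.mem_iSup_of_mem n hn
  rw [hs] at hle
  exact (Submodule.mem_iSup_of_directed _ (submodule_mono θ).directed_le).1 (hle trivial)

end Ffin

/-- If `A` and `B` are strong quasi-modules over `R`, then so is `A ⊗_R B`; moreover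
`Σ_{i+j=n} im(F_i A ⊗_R F_j B) ⊆ F_n (A ⊗_R B)`. -/
theorem stmt11 (R : Type) [CommRing R]
    (A B : Type) [AddCommGroup A] [AddCommGroup B] [Module R A] [Module R B]
    (ρA : R →+* Module.End R A) (ρB : R →+* Module.End R B)
    (hA : ∀ a : A, ∃ n : ℕ, a ∈ Ffin R (fun r x => ρA r x - r • x) n)
    (hB : ∀ b : B, ∃ n : ℕ, b ∈ Ffin R (fun r x => r • x - ρB r x) n) :
    (∀ x : TensorProduct R A B, ∃ n : ℕ,
      x ∈ Ffin R (fun r y => LinearMap.rTensor B (ρA r) y - LinearMap.lTensor A (ρB r) y) n) ∧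
    (∀ n : ℕ,
      (Submodule.span R { x : TensorProduct R A B | ∃ i j : ℕ, i + j = n ∧
          ∃ a ∈ Ffin R (fun r x => ρA r x - r • x) i,
            ∃ b ∈ Ffin R (fun r x => r • x - ρB r x) j,
              x = a ⊗ₜ[R] b } : Set (TensorProduct R A B)) ⊆
        Ffin R (fun r y => LinearMap.rTensor B (ρA r) y - LinearMap.lTensor A (ρB r) y) n) := by
  set θA : R → Module.End R A := fun r => ρA r - r • 1
  set θB : R → Module.End R B := fun r => r • 1 - ρB r
  set θT : R → Module.End R (A ⊗[R] B) := fun r => (ρA r).rTensor B - (ρB r).lTensor A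
  have hFA : Ffin R (fun r x => ρA r x - r • x) = fun n => (Ffin.submodule θA n : Set A) :=
    funext fun n => (Ffin.coe_submodule θA n).symm
  have hFB : Ffin R (fun r x => r • x - ρB r x) = fun n => (Ffin.submodule θB n : Set B) :=
    funext fun n => (Ffin.coe_submodule θB n).symm
  have hFT : Ffin R (fun r y => (ρA r).rTensor B y - (ρB r).lTensor A y) =
      fun n => (Ffin.submodule θT n : Set (A ⊗[R] B)) :=
    funext fun n => (Ffin.coe_submodule θT n).symm
  simp only [hFA, hFB, hFT, SetLike.mem_coe, SetLike.coe_subset_coe, Submodule.span_le] at hA hB ⊢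
  have leibniz (r : R) (a : A) (b : B) : θT r (a ⊗ₜ b) = θA r a ⊗ₜ b + a ⊗ₜ θB r b := by
    simp only [θT, θA, θB, LinearMap.sub_apply, LinearMap.smul_apply, Module.End.one_apply,
      LinearMap.rTensor_tmul, LinearMap.lTensor_tmul, sub_tmul, tmul_sub, smul_tmul]
    abel
  refine ⟨Ffin.exists_mem_submodule_of_span_eq_top (span_tmul_eq_top R A B) ?_, fun n => ?_⟩
  · rintro _ ⟨a, b, rfl⟩
    obtain ⟨i, ha⟩ := hA a
    obtain ⟨j, hb⟩ := hB b
    exact ⟨i + j, Ffin.map_mem_submodule_add (mk R A B) leibniz ha hb⟩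
  · rintro _ ⟨i, j, rfl, a, ha, b, hb, rfl⟩
    exact Ffin.map_mem_submodule_add (mk R A B) leibniz ha hb
end

section
/- Let K → R be a homomorphism of commutative rings and U, V, W be R-modules. If D' : U → V is a K-linear strongly R-differential operator of order ≤ n' and D'' : V → W is one of order ≤ n'', then the composition D'' ∘ D' : U → W is a K-linear strongly R-differential operator of order ≤ n' + n''. -/
/-!
The commutator `θ_r` satisfies the Leibniz rule `θ_r (D'' ∘ D') = θ_r D'' ∘ D' + D'' ∘ θ_r D'`,
and `θ_r` lowers the order of a strongly differential operator by one. Hence induction on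
`n' + n''` reduces the claim for `D'' ∘ D'` to the two terms on the right, whose pairs of orders
sum to one less.
-/

/-- The commutator operator `θ_r(e) = r ∘ e − e ∘ r` on `K`-linear maps `U → V`
between `R`-modules. -/
def theta (K R U V : Type) [CommRing K] [CommRing R] [AddCommGroup U] [AddCommGroup V]
    [Module K U] [Module K V] [Module R U] [Module R V]
    [SMulCommClass K R U] [SMulCommClass K R V]
    (r : R) (e : U →ₗ[K] V) : U →ₗ[K] V where
  toFun u := r • e u - e (r • u)
  map_add' u₁ u₂ := by
    simp only [map_add, smul_add]
    abel
  map_smul' c u := by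
    simp only [RingHom.id_apply]
    rw [← smul_comm c r u]
    simp only [map_smul]
    rw [← smul_comm c r (e u), ← smul_sub]

section StronglyDifferentialOperator

variable {K R U V W : Type} [CommRing K] [CommRing R]
  [AddCommGroup U] [AddCommGroup V] [AddCommGroup W]
  [Module K U] [Module K V] [Module K W] [Module R U] [Module R V] [Module R W]
  [SMulCommClass K R U] [SMulCommClass K R V] [SMulCommClass K R W]

theorem theta_apply (r : R) (e : U →ₗ[K] V) (u : U) :
    theta K R U V r e u = r • e u - e (r • u) := rfl

theorem theta_zero (r : R) : theta K R U V r 0 = 0 := by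
  ext u
  simp [theta_apply]

theorem theta_add (r : R) (e f : U →ₗ[K] V) :
    theta K R U V r (e + f) = theta K R U V r e + theta K R U V r f := by
  ext u
  simp only [theta_apply, LinearMap.add_apply, smul_add]
  abel

theorem theta_comp (r : R) (e : U →ₗ[K] V) (f : V →ₗ[K] W) :
    theta K R U W r (f.comp e) = (theta K R V W r f).comp e + f.comp (theta K R U V r e) := by
  ext u
  simp only [theta_apply, LinearMap.comp_apply, LinearMap.add_apply, map_sub]
  abel

variable (K R U V) in
def IsStronglyDiffOp (n : ℕ) (e : U →ₗ[K] V) : Prop :=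
  ∀ rs : List R, rs.length = n + 1 → rs.foldr (theta K R U V) e = 0

theorem isStronglyDiffOp_zero_iff {e : U →ₗ[K] V} :
    IsStronglyDiffOp K R U V 0 e ↔ ∀ r : R, theta K R U V r e = 0 := by
  refine ⟨fun h r => h [r] rfl, fun h rs hrs => ?_⟩
  obtain ⟨r, rfl⟩ := List.length_eq_one_iff.mp hrs
  exact h r

theorem isStronglyDiffOp_succ_iff {n : ℕ} {e : U →ₗ[K] V} :
    IsStronglyDiffOp K R U V (n + 1) e ↔
      ∀ r : R, IsStronglyDiffOp K R U V n (theta K R U V r e) := by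
  have foldr_concat (rs : List R) (r : R) :
      (rs ++ [r]).foldr (theta K R U V) e = rs.foldr (theta K R U V) (theta K R U V r e) := by
    simp only [List.foldr_append, List.foldr_cons, List.foldr_nil]
  constructor
  · intro h r rs hrs
    rw [← foldr_concat]
    exact h _ (by simp [hrs])
  · intro h rs hrs
    obtain ⟨rs, r, rfl⟩ := (List.eq_nil_or_concat rs).resolve_left (by rintro rfl; simp at hrs)
    rw [List.concat_eq_append, foldr_concat]
    exact h r rs (by simpa using hrs)

theorem isStronglyDiffOp_zero (n : ℕ) : IsStronglyDiffOp K R U V n 0 := by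
  induction n with
  | zero => exact isStronglyDiffOp_zero_iff.mpr theta_zero
  | succ n ih => exact isStronglyDiffOp_succ_iff.mpr fun r => by rwa [theta_zero]

theorem IsStronglyDiffOp.add {n : ℕ} {e f : U →ₗ[K] V} (he : IsStronglyDiffOp K R U V n e)
    (hf : IsStronglyDiffOp K R U V n f) : IsStronglyDiffOp K R U V n (e + f) := by
  induction n generalizing e f with
  | zero =>
    rw [isStronglyDiffOp_zero_iff] at *
    intro r
    rw [theta_add, he r, hf r, add_zero]
  | succ n ih =>
    rw [isStronglyDiffOp_succ_iff] at *
    intro r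
    rw [theta_add]
    exact ih (he r) (hf r)

theorem IsStronglyDiffOp.comp {a b : ℕ} {e : U →ₗ[K] V} {f : V →ₗ[K] W}
    (he : IsStronglyDiffOp K R U V a e) (hf : IsStronglyDiffOp K R V W b f) :
    IsStronglyDiffOp K R U W (a + b) (f.comp e) := by
  induction hN : a + b generalizing a b e f with
  | zero =>
    obtain ⟨rfl, rfl⟩ : a = 0 ∧ b = 0 := by omega
    rw [isStronglyDiffOp_zero_iff] at *
    intro r
    rw [theta_comp, he r, hf r, LinearMap.zero_comp, LinearMap.comp_zero, add_zero]
  | succ N ih =>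
    refine isStronglyDiffOp_succ_iff.mpr fun r => ?_
    rw [theta_comp]
    refine IsStronglyDiffOp.add ?_ ?_
    · cases b with
      | zero =>
        rw [isStronglyDiffOp_zero_iff.mp hf r, LinearMap.zero_comp]
        exact isStronglyDiffOp_zero N
      | succ b => exact ih he (isStronglyDiffOp_succ_iff.mp hf r) (by omega)
    · cases a with
      | zero =>
        rw [isStronglyDiffOp_zero_iff.mp he r, LinearMap.comp_zero]
        exact isStronglyDiffOp_zero N
      | succ a => exact ih (isStronglyDiffOp_succ_iff.mp he r) hf (by omega)

end StronglyDifferentialOperator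

theorem stmt12_general (K R : Type) [CommRing K] [CommRing R]
    (U V W : Type) [AddCommGroup U] [AddCommGroup V] [AddCommGroup W]
    [Module K U] [Module K V] [Module K W] [Module R U] [Module R V] [Module R W]
    [SMulCommClass K R U] [SMulCommClass K R V] [SMulCommClass K R W]
    (n' n'' : ℕ) (D' : U →ₗ[K] V) (D'' : V →ₗ[K] W)
    (h' : ∀ rs : List R, rs.length = n' + 1 →
      rs.foldr (fun r e => theta K R U V r e) D' = 0)
    (h'' : ∀ rs : List R, rs.length = n'' + 1 →
      rs.foldr (fun r e => theta K R V W r e) D'' = 0) :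
    ∀ rs : List R, rs.length = n' + n'' + 1 →
      rs.foldr (fun r e => theta K R U W r e) (D''.comp D') = 0 :=
  IsStronglyDiffOp.comp (R := R) h' h''

/-- Composition of strongly differential operators: if `D' : U → V` is a `K`-linear
strongly `R`-differential operator of order `≤ n'` (i.e. annihilated by every
composition of `n' + 1` commutator operators `θ_r`) and `D'' : V → W` is one of order
`≤ n''`, then `D'' ∘ D' : U → W` is a strongly `R`-differential operator of order
`≤ n' + n''`. -/
theorem stmt12 (K R : Type) [CommRing K] [CommRing R] [Algebra K R]
    (U V W : Type) [AddCommGroup U] [AddCommGroup V] [AddCommGroup W]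
    [Module K U] [Module K V] [Module K W] [Module R U] [Module R V] [Module R W]
    [IsScalarTower K R U] [IsScalarTower K R V] [IsScalarTower K R W]
    [SMulCommClass K R U] [SMulCommClass K R V] [SMulCommClass K R W]
    (n' n'' : ℕ) (D' : U →ₗ[K] V) (D'' : V →ₗ[K] W)
    (h' : ∀ rs : List R, rs.length = n' + 1 →
      rs.foldr (fun r e => theta K R U V r e) D' = 0)
    (h'' : ∀ rs : List R, rs.length = n'' + 1 →
      rs.foldr (fun r e => theta K R V W r e) D'' = 0) :
    ∀ rs : List R, rs.length = n' + n'' + 1 →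
      rs.foldr (fun r e => theta K R U W r e) (D''.comp D') = 0 :=
  stmt12_general K R U V W n' n'' D' D'' h' h''
end

section
/- Let σ : R → S be a flat epimorphism of commutative rings (S flat as R-module, and σ an epimorphism in the category of rings). Let S be local with maximal ideal n, and put p = σ^{-1}(n). Then there is a ring isomorphism S ≅ R_p commuting with the maps from R. -/
/-!
Elements of `R` outside `p` become units in `S`, so `R → S` factors through `A = R_p`. The
induced map `A → S` is a flat local homomorphism of local rings, hence faithfully flat, and it
is still an epimorphism. A faithfully flat epimorphism is an isomorphism: faithful flatness
makes `A → S` injective and identifies `A` with the equalizer of `s ↦ s ⊗ 1` and `s ↦ 1 ⊗ s`,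
which for an epimorphism is all of `S`.
-/

open scoped TensorProduct

theorem Algebra.TensorProduct.tmul_one_eq_one_tmul_of_injective_lmul'
    {R S : Type*} [CommRing R] [CommRing S] [Algebra R S]
    (hepi : Function.Injective (Algebra.TensorProduct.lmul' R : S ⊗[R] S →ₐ[R] S)) (s : S) :
    s ⊗ₜ[R] (1 : S) = 1 ⊗ₜ[R] s :=
  hepi (by simp [Algebra.TensorProduct.lmul'_apply_tmul])

theorem Algebra.bijective_algebraMap_of_faithfullyFlat_of_injective_lmul'
    (R A S : Type*) [CommRing R] [CommRing A] [CommRing S] [Algebra R A] [Algebra R S]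
    [Algebra A S] [IsScalarTower R A S] [Module.FaithfullyFlat A S]
    (hepi : Function.Injective (Algebra.TensorProduct.lmul' R : S ⊗[R] S →ₐ[R] S)) :
    Function.Bijective (algebraMap A S) := by
  refine ⟨FaithfulSMul.algebraMap_injective A S, fun s => ?_⟩
  have hs : s ⊗ₜ[A] (1 : S) = 1 ⊗ₜ[A] s := by
    simpa using congrArg (TensorProduct.mapOfCompatibleSMul A R R S S)
      (Algebra.TensorProduct.tmul_one_eq_one_tmul_of_injective_lmul' hepi s)
  rw [← Set.mem_range,
    ← (Algebra.IsEffective.of_faithfullyFlat A S).eqLocus_includeLeft_includeRight]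
  exact hs

section LocalTarget

variable {R S : Type*} [CommRing R] [CommRing S] [Algebra R S] [IsLocalRing S] {p : Ideal R}

theorem notMem_iff_isUnit_algebraMap_of_eq_comap
    (hp : p = (IsLocalRing.maximalIdeal S).comap (algebraMap R S)) (r : R) :
    r ∉ p ↔ IsUnit (algebraMap R S r) := by
  rw [hp, Ideal.mem_comap, IsLocalRing.notMem_maximalIdeal]

theorem isUnit_algebraMap_primeCompl_of_eq_comap [p.IsPrime]
    (hp : p = (IsLocalRing.maximalIdeal S).comap (algebraMap R S)) (t : p.primeCompl) :
    IsUnit (algebraMap R S t) :=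
  (notMem_iff_isUnit_algebraMap_of_eq_comap hp t).mp t.2

theorem isLocalHom_lift_atPrime_of_eq_comap [p.IsPrime]
    (hp : p = (IsLocalRing.maximalIdeal S).comap (algebraMap R S)) :
    IsLocalHom (IsLocalization.lift (M := p.primeCompl) (S := Localization.AtPrime p)
      (isUnit_algebraMap_primeCompl_of_eq_comap hp)) := by
  refine ⟨fun a ha => ?_⟩
  obtain ⟨⟨r, t⟩, rfl⟩ := IsLocalization.mk'_surjective p.primeCompl a
  have hr := (IsLocalization.lift_mk'_spec (S := Localization.AtPrime p)
    (isUnit_algebraMap_primeCompl_of_eq_comap hp) r _ t).mp rfl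
  rw [IsLocalization.AtPrime.isUnit_mk'_iff]
  exact (notMem_iff_isUnit_algebraMap_of_eq_comap hp r).mpr
    (hr ▸ (isUnit_algebraMap_primeCompl_of_eq_comap hp t).mul ha)

end LocalTarget

/-- Let `σ : R → S` be a flat epimorphism of commutative rings (`S` is flat as an
`R`-module, and the multiplication map `S ⊗_R S → S` is an isomorphism), with `S` a
local ring with maximal ideal `n`, and let `p = σ⁻¹(n)`.  Then there is a ring
isomorphism `S ≅ R_p` commuting with the maps from `R`. -/
theorem stmt17 (R S : Type) [CommRing R] [CommRing S] [Algebra R S] [Module.Flat R S]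
    (hepi : Function.Bijective ⇑(Algebra.TensorProduct.lmul' R : S ⊗[R] S →ₐ[R] S))
    [IsLocalRing S]
    (p : Ideal R) (hp : p = (IsLocalRing.maximalIdeal S).comap (algebraMap R S))
    [p.IsPrime] :
    ∃ e : Localization.AtPrime p ≃+* S,
      ∀ r : R, e (algebraMap R (Localization.AtPrime p) r) = algebraMap R S r := by
  let f := IsLocalization.lift (M := p.primeCompl) (S := Localization.AtPrime p)
    (isUnit_algebraMap_primeCompl_of_eq_comap hp)
  let : Algebra (Localization.AtPrime p) S := f.toAlgebra
  have hf : ∀ r : R, f (algebraMap R _ r) = algebraMap R S r := IsLocalization.lift_eq _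
  have : IsScalarTower R (Localization.AtPrime p) S :=
    .of_algebraMap_eq fun r => (hf r).symm
  -- `S` is its own localization at `p.primeCompl`, so it is a base change of `S` to `R_p`.
  have : Module.Flat (Localization.AtPrime p) S :=
    Module.Flat.of_isLocalizedModule _ p.primeCompl (LinearMap.id : S →ₗ[R] S)
      (h := isLocalizedModule_id p.primeCompl S (Localization.AtPrime p))
  have : IsLocalHom (algebraMap (Localization.AtPrime p) S) :=
    isLocalHom_lift_atPrime_of_eq_comap hp
  have : Module.FaithfullyFlat (Localization.AtPrime p) S :=
    .of_flat_of_isLocalHom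
  exact ⟨.ofBijective f
    (Algebra.bijective_algebraMap_of_faithfullyFlat_of_injective_lmul' R _ S hepi.1), hf⟩
end

section
/- Let R → S be an epimorphism of commutative rings and B an S-S-bimodule. Denote by F and F' the natural ordinal-indexed increasing filtrations on B viewed as an R-R-bimodule and as an S-S-bimodule respectively (F_0 B = {b : rb = br for all r in the ring}, F_α B = {b : rb − br ∈ ⋃_{β<α} F_β B for all r}). Then F_α B = F'_α B for all ordinals α; in particular B is a quite quasi-module over S if and only if it is a quite quasi-module over R. -/
open scoped TensorProduct

/-- An `S`-`S`-bimodule is encoded as an abelian group `B` with two commuting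
`S`-actions, given by ring homomorphisms `l, r : S →+* AddMonoid.End B` (left and right
multiplication).  This is the ordinal-indexed increasing filtration
`F_0 B = {b : l a b = r a b for all a}`,
`F_α B = {b : l a b − r a b ∈ ⋃_{β<α} F_β B for all a}`. -/
noncomputable def Bfilt {A : Type} [CommRing A] {B : Type} [AddCommGroup B]
    (l r : A →+* AddMonoid.End B) : Ordinal.{0} → Set B :=
  WellFounded.fix Ordinal.lt_wf (C := fun _ => Set B) fun α F =>
    { b | ∀ a : A, l a b - r a b = 0 ∨ ∃ β, ∃ h : β < α, (l a b - r a b) ∈ F β h }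

/-!
If `R` acts centrally on `b` modulo an `S`-sub-bimodule `N`, the map `(a, a') ↦ a b a' mod N` is
`R`-balanced, so it factors through `S ⊗_R S`. For an epimorphism `s ⊗ 1 = 1 ⊗ s` there, hence
`s b ≡ b s` modulo `N`. Taking for `N` the union of the earlier layers, which by induction is the
same for `R` and for `S`, this gives `F_α B ⊆ F'_α B`; the reverse inclusion is immediate.
-/

section Filtration

variable {A : Type} [CommRing A] {B : Type} [AddCommGroup B] (l r : A →+* AddMonoid.End B)

def BfiltLT (α : Ordinal.{0}) : Set B :=
  {x | x = 0 ∨ ∃ β < α, x ∈ Bfilt l r β}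

variable {l r}

lemma mem_Bfilt {α : Ordinal.{0}} {b : B} :
    b ∈ Bfilt l r α ↔ ∀ a, l a b - r a b ∈ BfiltLT l r α := by
  conv_lhs => rw [Bfilt, WellFounded.fix_eq]
  simp only [BfiltLT, Set.mem_ofPred_eq, exists_prop]
  rfl

lemma zero_mem_BfiltLT (α : Ordinal.{0}) : (0 : B) ∈ BfiltLT l r α :=
  Or.inl rfl

lemma Bfilt_subset_BfiltLT {β α : Ordinal.{0}} (h : β < α) :
    Bfilt l r β ⊆ BfiltLT l r α :=
  fun _ hx => Or.inr ⟨β, h, hx⟩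

lemma BfiltLT_mono {β α : Ordinal.{0}} (h : β ≤ α) : BfiltLT l r β ⊆ BfiltLT l r α := by
  rintro x (hx | ⟨γ, hγ, hx⟩)
  · exact Or.inl hx
  · exact Or.inr ⟨γ, hγ.trans_le h, hx⟩

lemma add_mem_BfiltLT (α : Ordinal.{0}) {x y : B} :
    x ∈ BfiltLT l r α → y ∈ BfiltLT l r α → x + y ∈ BfiltLT l r α := by
  induction α using WellFoundedLT.induction generalizing x y with
  | ind α IH =>
    rintro (rfl | ⟨β, hβ, hx⟩) hy
    · rwa [zero_add]
    rcases hy with rfl | ⟨β', hβ', hy⟩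
    · rw [add_zero]; exact Bfilt_subset_BfiltLT hβ hx
    have hγ : max β β' < α := max_lt hβ hβ'
    refine Bfilt_subset_BfiltLT hγ (mem_Bfilt.2 fun a => ?_)
    have hsplit : l a (x + y) - r a (x + y) = (l a x - r a x) + (l a y - r a y) := by
      rw [map_add, map_add]; abel
    rw [hsplit]
    exact IH _ hγ (BfiltLT_mono (le_max_left _ _) (mem_Bfilt.1 hx a))
      (BfiltLT_mono (le_max_right _ _) (mem_Bfilt.1 hy a))

lemma map_mem_BfiltLT {T : AddMonoid.End B} (hl : ∀ a, Commute T (l a))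
    (hr : ∀ a, Commute T (r a)) (α : Ordinal.{0}) {x : B} :
    x ∈ BfiltLT l r α → T x ∈ BfiltLT l r α := by
  induction α using WellFoundedLT.induction generalizing x with
  | ind α IH =>
    rintro (rfl | ⟨β, hβ, hx⟩)
    · rw [map_zero]; exact zero_mem_BfiltLT α
    refine Bfilt_subset_BfiltLT hβ (mem_Bfilt.2 fun a => ?_)
    have hT : T (l a x - r a x) = l a (T x) - r a (T x) := by
      rw [map_sub]
      exact congrArg₂ (· - ·) (DFunLike.congr_fun (hl a).eq x) (DFunLike.congr_fun (hr a).eq x)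
    rw [← hT]
    exact IH β hβ (mem_Bfilt.1 hx a)

variable (l r) in
def BfiltLT.addSubgroup (α : Ordinal.{0}) : AddSubgroup B where
  carrier := BfiltLT l r α
  zero_mem' := zero_mem_BfiltLT α
  add_mem' := add_mem_BfiltLT α
  neg_mem' := map_mem_BfiltLT (T := -1) (fun _ => .neg_one_left _) (fun _ => .neg_one_left _) α

lemma BfiltLT_congr {A' : Type} [CommRing A'] {l' r' : A' →+* AddMonoid.End B} {α : Ordinal.{0}}
    (h : ∀ β < α, Bfilt l r β = Bfilt l' r' β) : BfiltLT l r α = BfiltLT l' r' α := by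
  ext x
  refine or_congr_right (exists_congr fun β => ?_)
  exact and_congr_right fun hβ => by rw [h β hβ]

end Filtration

theorem apply_one_eq_one_apply_of_injective_lmul' {R S M : Type*} [CommSemiring R]
    [CommSemiring S] [Algebra R S] [AddCommMonoid M]
    (hepi : Function.Injective ⇑(Algebra.TensorProduct.lmul' R : S ⊗[R] S →ₐ[R] S))
    (f : S →+ S →+ M) (hf : ∀ (c : R) (a a' : S), f (c • a) a' = f a (c • a')) (s : S) :
    f s 1 = f 1 s := by
  have hs : s ⊗ₜ[R] (1 : S) = (1 : S) ⊗ₜ[R] s :=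
    hepi (by simp [Algebra.TensorProduct.lmul'_apply_tmul])
  simpa only [TensorProduct.liftAddHom_tmul] using congrArg (TensorProduct.liftAddHom f hf) hs

section Epimorphism

variable {R S : Type} [CommRing R] [CommRing S] [Algebra R S] {B : Type} [AddCommGroup B]
  {l r : S →+* AddMonoid.End B}

lemma commute_left_right (hcomm : ∀ (s t : S) (b : B), l s (r t b) = r t (l s b)) (s t : S) :
    Commute (l s) (r t) :=
  AddMonoidHom.ext (hcomm s t)

lemma sub_mem_of_injective_lmul'
    (hepi : Function.Injective ⇑(Algebra.TensorProduct.lmul' R : S ⊗[R] S →ₐ[R] S))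
    (hcomm : ∀ (s t : S) (b : B), l s (r t b) = r t (l s b))
    {N : AddSubgroup B} (hl : ∀ s, ∀ x ∈ N, l s x ∈ N) (hr : ∀ s, ∀ x ∈ N, r s x ∈ N)
    {b : B} (hb : ∀ c : R, l (algebraMap R S c) b - r (algebraMap R S c) b ∈ N) (s : S) :
    l s b - r s b ∈ N := by
  let f : S →+ S →+ B ⧸ N :=
    AddMonoidHom.mk' (fun a => AddMonoidHom.mk' (fun a' => (l a (r a' b) : B ⧸ N))
      (fun a₁ a₂ => by rw [map_add, ← QuotientAddGroup.mk_add]; exact congrArg _ (map_add _ _ _)))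
      (fun a₁ a₂ => by ext; rw [map_add]; rfl)
  have hf : ∀ (c : R) (a a' : S), f (c • a) a' = f a (c • a') := by
    intro c a a'
    have hdiff : l (c • a) (r a' b) - l a (r (c • a') b) =
        l a (r a' (l (algebraMap R S c) b - r (algebraMap R S c) b)) := by
      simp only [Algebra.smul_def, mul_comm (algebraMap R S c), map_mul, AddMonoid.End.coe_mul,
        Function.comp_apply, map_sub, hcomm]
    simp only [f, AddMonoidHom.mk'_apply, QuotientAddGroup.eq_iff_sub_mem, hdiff]
    exact hl _ _ (hr _ _ (hb c))
  have := apply_one_eq_one_apply_of_injective_lmul' hepi f hf s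
  simpa only [f, AddMonoidHom.mk'_apply, map_one, AddMonoid.End.coe_one, id,
    QuotientAddGroup.eq_iff_sub_mem] using this

end Epimorphism

/-- Let `R → S` be an epimorphism of commutative rings (i.e. the multiplication map
`S ⊗_R S → S` is an isomorphism) and `B` an `S`-`S`-bimodule.  Then the natural
ordinal-indexed filtrations of `B` as an `R`-`R`-bimodule and as an `S`-`S`-bimodule
coincide: `F_α B = F'_α B` for every ordinal `α`; in particular `B` is a quite
quasi-module over `S` if and only if it is a quite quasi-module over `R`. -/
theorem stmt18 (R S : Type) [CommRing R] [CommRing S] [Algebra R S]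
    (hepi : Function.Bijective ⇑(Algebra.TensorProduct.lmul' R : S ⊗[R] S →ₐ[R] S))
    (B : Type) [AddCommGroup B] (l r : S →+* AddMonoid.End B)
    (hcomm : ∀ (s t : S) (b : B), l s (r t b) = r t (l s b)) :
    (∀ α : Ordinal.{0},
      Bfilt (l.comp (algebraMap R S)) (r.comp (algebraMap R S)) α = Bfilt l r α) ∧
    ((∀ b : B, ∃ α : Ordinal.{0}, b ∈ Bfilt l r α) ↔
      (∀ b : B, ∃ α : Ordinal.{0},
        b ∈ Bfilt (l.comp (algebraMap R S)) (r.comp (algebraMap R S)) α)) := by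
  have hfilt : ∀ α : Ordinal.{0},
      Bfilt (l.comp (algebraMap R S)) (r.comp (algebraMap R S)) α = Bfilt l r α := by
    intro α
    induction α using WellFoundedLT.induction with
    | ind α IH =>
      have hl : ∀ s, ∀ x ∈ BfiltLT.addSubgroup l r α, l s x ∈ BfiltLT.addSubgroup l r α :=
        fun s _ => map_mem_BfiltLT (fun a => (Commute.all s a).map l)
          (fun a => commute_left_right hcomm s a) α
      have hr : ∀ s, ∀ x ∈ BfiltLT.addSubgroup l r α, r s x ∈ BfiltLT.addSubgroup l r α :=
        fun s _ => map_mem_BfiltLT (fun a => (commute_left_right hcomm a s).symm)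
          (fun a => (Commute.all s a).map r) α
      ext b
      rw [mem_Bfilt, mem_Bfilt, BfiltLT_congr IH]
      exact ⟨sub_mem_of_injective_lmul' hepi.injective hcomm hl hr,
        fun hb c => hb (algebraMap R S c)⟩
  exact ⟨hfilt, forall_congr' fun b => exists_congr fun α => by rw [hfilt]⟩
end
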